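/- Let $d \geq 3$, $k \geq 2$ be integers and let $E_k^d = [\frac{-d^{k-2}(d-1)2\pi}{d^k-1}, \frac{d^{k-2}2\pi}{d^k-1}) \cup [\frac{2\pi}{d} - \frac{(d-1)2\pi}{d(d^k-1)}, \frac{2\pi}{d} + \frac{2\pi}{d(d^k-1)}) \cup \bigcup_{j=1}^{k-2}[2\pi d^{j-1} - \frac{d^{j-1}(d-1)2\pi}{d^k-1}, 2\pi d^{j-1} + \frac{d^{j-1}2\pi}{d^k-1})$. Then $E_k^d \subseteq d \cdot E_k^d$ and $d\cdot E_k^d \setminus E_k^d = [\frac{-d^{k-1}(d-1)2\pi}{d^k-1}, \frac{-d^{k-2}(d-1)2\pi}{d^k-1}) \cup [\frac{d^{k-2}2\pi}{d^k-1}, \frac{2\pi}{d} - \frac{(d-1)2\pi}{d(d^k-1)}) \cup [2\pi d^{k-2} - \frac{d^{k-2}(d-1)2\pi}{d^k-1}, 2\pi d^{k-2} + \frac{d^{k-2}2\pi}{d^k-1})$. -/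

import Mathlib

open Real Set

/-- The generalized scaling set `E_k^d` for dilation `d ≥ 3`. -/
noncomputable def genScalingSetD (d k : ℕ) : Set ℝ :=
  Ico (-((d:ℝ)^(k-2) * ((d:ℝ) - 1) * (2*π)) / ((d:ℝ)^k - 1))
      (((d:ℝ)^(k-2) * (2*π)) / ((d:ℝ)^k - 1)) ∪
  Ico (2*π/(d:ℝ) - ((d:ℝ) - 1) * (2*π) / ((d:ℝ) * ((d:ℝ)^k - 1)))
      (2*π/(d:ℝ) + 2*π / ((d:ℝ) * ((d:ℝ)^k - 1))) ∪
  ⋃ j ∈ Finset.Icc 1 (k - 2),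
    Ico (2*π*(d:ℝ)^(j-1) - ((d:ℝ)^(j-1) * ((d:ℝ) - 1) * (2*π)) / ((d:ℝ)^k - 1))
        (2*π*(d:ℝ)^(j-1) + ((d:ℝ)^(j-1) * (2*π)) / ((d:ℝ)^k - 1))

/-!
Measure lengths in units of `2π / (d ^ (m + 2) - 1)`, where `k = m + 2`. Then `E_k^d` is the
union of the head interval `H_m = [d^m - d^(m+1), d^m)` and of the tail intervals
`T_i = [d^(m+1+i) - d^i, d^(m+1+i))` for `i ≤ m`. Multiplication by `d` maps `H_m` onto
`H_(m+1)` and `T_i` onto `T_(i+1)`. Since `d ≥ 2`, `H_(m+1)` contains `H_m ∪ T_0`, and the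
intervals `H_(m+1), T_1, T_2, …` follow each other from left to right. Hence `E ⊆ d E` and
`d E \ E = (H_(m+1) \ (H_m ∪ T_0)) ∪ T_(m+1)`.
-/

theorem Set.Ico_disjoint_Ico_of_le {α : Type*} [Preorder α] {a b c d : α} (h : b ≤ c) :
    Disjoint (Ico a b) (Ico c d) :=
  (Iio_disjoint_Ici h).mono Ico_subset_Iio_self Ico_subset_Ici_self

theorem Set.Ico_diff_Ico_union_Ico {α : Type*} [LinearOrder α] {a b c d e : α}
    (hab : a ≤ b) (hbc : b ≤ c) (hcd : c ≤ d) (hde : d ≤ e) :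
    Ico a e \ (Ico b c ∪ Ico d e) = Ico a b ∪ Ico c d := by
  ext x
  simp only [mem_sdiff, mem_union, mem_Ico]
  grind

theorem Finset.set_biUnion_Icc_one_eq_biUnion_lt {α : Type*} (u : ℕ → Set α) (m : ℕ) :
    ⋃ j ∈ Finset.Icc 1 m, u j = ⋃ i < m, u (i + 1) := by
  ext x
  simp only [mem_iUnion, Finset.mem_Icc, exists_prop]
  constructor
  · rintro ⟨j, ⟨hj1, hjm⟩, hx⟩
    exact ⟨j - 1, by omega, by rwa [Nat.sub_add_cancel hj1]⟩
  · rintro ⟨i, hi, hx⟩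
    exact ⟨i + 1, ⟨by omega, by omega⟩, hx⟩

namespace GenScalingSet

variable {D : ℝ} (m : ℕ)

def headInterval (D : ℝ) (m : ℕ) : Set ℝ := Ico (D ^ m - D ^ (m + 1)) (D ^ m)

def tailInterval (D : ℝ) (m i : ℕ) : Set ℝ := Ico (D ^ (m + 1 + i) - D ^ i) (D ^ (m + 1 + i))

/-- `genScalingSetD d (m + 2)` in units of `2π / (d ^ (m + 2) - 1)`: the head interval is the
first interval of `E_{m+2}^d`, the tail interval `0` the second one, and the tail interval `j`
the one indexed by `j` in the union over `1 ≤ j ≤ m`. -/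
def normalizedScalingSet (D : ℝ) (m : ℕ) : Set ℝ :=
  headInterval D m ∪ ⋃ i < m + 1, tailInterval D m i

theorem image_mul_headInterval (hD : 0 < D) :
    (D * ·) '' headInterval D m = headInterval D (m + 1) := by
  rw [headInterval, headInterval, image_mul_left_Ico hD]
  congr 1 <;> ring

theorem image_mul_tailInterval (hD : 0 < D) (i : ℕ) :
    (D * ·) '' tailInterval D m i = tailInterval D m (i + 1) := by
  rw [tailInterval, tailInterval, image_mul_left_Ico hD]
  congr 1 <;> ring

theorem image_mul_normalizedScalingSet (hD : 0 < D) :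
    (D * ·) '' normalizedScalingSet D m =
      headInterval D (m + 1) ∪ ⋃ i < m + 1, tailInterval D m (i + 1) := by
  simp only [normalizedScalingSet, image_union, image_iUnion₂, image_mul_headInterval m hD,
    image_mul_tailInterval m hD]

theorem pow_le_tailInterval_start (hD : 2 ≤ D) {i j : ℕ} (hij : i < j) :
    D ^ (m + 1 + i) ≤ D ^ (m + 1 + j) - D ^ j := by
  have hD1 : 1 ≤ D := by linarith
  have h₁ : D ^ (m + 1 + i) ≤ D ^ (m + j) := pow_le_pow_right₀ hD1 (by omega)
  have h₂ : D ^ j ≤ D ^ (m + j) := pow_le_pow_right₀ hD1 (by omega)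
  calc D ^ (m + 1 + i) ≤ D ^ (m + j) := h₁
    _ ≤ D * D ^ (m + j) - D ^ (m + j) := by nlinarith [pow_nonneg (zero_le_two.trans hD) (m + j)]
    _ ≤ D ^ (m + 1 + j) - D ^ j := by
      rw [show D ^ (m + 1 + j) = D * D ^ (m + j) by ring]; linarith

theorem disjoint_tailInterval (hD : 2 ≤ D) {i j : ℕ} (hij : i < j) :
    Disjoint (tailInterval D m i) (tailInterval D m j) :=
  Ico_disjoint_Ico_of_le (pow_le_tailInterval_start m hD hij)

theorem disjoint_headInterval_succ_tailInterval (hD : 2 ≤ D) {j : ℕ} (hj : 0 < j) :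
    Disjoint (headInterval D (m + 1)) (tailInterval D m j) :=
  Ico_disjoint_Ico_of_le (by simpa using pow_le_tailInterval_start m hD hj)

theorem pow_le_pow_succ_sub_one (hD : 2 ≤ D) : D ^ m ≤ D ^ (m + 1) - 1 := by
  have : 1 ≤ D ^ m := one_le_pow₀ (by linarith)
  rw [pow_succ]
  nlinarith

theorem disjoint_headInterval_tailInterval (hD : 2 ≤ D) (j : ℕ) :
    Disjoint (headInterval D m) (tailInterval D m j) := by
  have hm := pow_le_pow_succ_sub_one m hD
  have hj : 1 ≤ D ^ j := one_le_pow₀ (by linarith)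
  refine Ico_disjoint_Ico_of_le ?_
  calc D ^ m ≤ D ^ (m + 1) - 1 := hm
    _ ≤ D ^ j * (D ^ (m + 1) - 1) :=
      le_mul_of_one_le_left (hm.trans' (pow_nonneg (by linarith) m)) hj
    _ = D ^ (m + 1 + j) - D ^ j := by ring

theorem pow_succ_sub_pow_succ_succ_le (hD : 0 ≤ D) :
    D ^ (m + 1) - D ^ (m + 2) ≤ D ^ m - D ^ (m + 1) := by
  have : 0 ≤ D ^ m * (D - 1) ^ 2 := by positivity
  linarith [show D ^ m - D ^ (m + 1) - (D ^ (m + 1) - D ^ (m + 2)) = D ^ m * (D - 1) ^ 2 by ring]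

theorem headInterval_succ_diff (hD : 2 ≤ D) :
    headInterval D (m + 1) \ (headInterval D m ∪ tailInterval D m 0) =
      Ico (D ^ (m + 1) - D ^ (m + 2)) (D ^ m - D ^ (m + 1)) ∪ Ico (D ^ m) (D ^ (m + 1) - 1) := by
  rw [headInterval, headInterval, tailInterval, add_zero, pow_zero]
  exact Ico_diff_Ico_union_Ico (pow_succ_sub_pow_succ_succ_le m (by linarith))
    (by linarith [pow_nonneg (zero_le_two.trans hD) (m + 1)]) (pow_le_pow_succ_sub_one m hD)
    (by linarith)

theorem headInterval_union_tailInterval_zero_subset (hD : 2 ≤ D) :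
    headInterval D m ∪ tailInterval D m 0 ⊆ headInterval D (m + 1) := by
  have := pow_le_pow_succ_sub_one m hD
  rw [headInterval, headInterval, tailInterval, add_zero, pow_zero]
  exact union_subset
    (Ico_subset_Ico (pow_succ_sub_pow_succ_succ_le m (by linarith)) (by linarith))
    (Ico_subset_Ico (by linarith [one_le_pow₀ (n := m + 2) (by linarith : 1 ≤ D)]) le_rfl)

theorem normalizedScalingSet_subset_image_mul (hD : 2 ≤ D) :
    normalizedScalingSet D m ⊆ (D * ·) '' normalizedScalingSet D m := by
  rw [image_mul_normalizedScalingSet m (by linarith), normalizedScalingSet,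
    biUnion_lt_succ' (tailInterval D m), biUnion_lt_succ (fun i => tailInterval D m (i + 1)),
    ← union_assoc]
  exact union_subset_union (headInterval_union_tailInterval_zero_subset m hD) subset_union_left

theorem image_mul_normalizedScalingSet_diff (hD : 2 ≤ D) :
    (D * ·) '' normalizedScalingSet D m \ normalizedScalingSet D m =
      Ico (D ^ (m + 1) - D ^ (m + 2)) (D ^ m - D ^ (m + 1)) ∪ Ico (D ^ m) (D ^ (m + 1) - 1) ∪
        tailInterval D m (m + 1) := by
  rw [image_mul_normalizedScalingSet m (by linarith), normalizedScalingSet,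
    biUnion_lt_succ' (tailInterval D m), biUnion_lt_succ (fun i => tailInterval D m (i + 1)),
    ← headInterval_succ_diff m hD]
  set U := ⋃ i < m, tailInterval D m (i + 1)
  have hHU : Disjoint (headInterval D (m + 1)) U := disjoint_iUnion₂_right.2 fun i _ =>
    disjoint_headInterval_succ_tailInterval m hD i.succ_pos
  have hTH := (disjoint_headInterval_tailInterval m hD (m + 1)).symm
  have hT0 := (disjoint_tailInterval m hD m.succ_pos).symm
  have hTU : Disjoint (tailInterval D m (m + 1)) U := disjoint_iUnion₂_right.2 fun i hi =>
    (disjoint_tailInterval m hD (by omega)).symm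
  rw [disjoint_left] at hHU hTH hT0 hTU
  ext x
  simp only [mem_sdiff, mem_union]
  tauto

end GenScalingSet

open GenScalingSet

theorem genScalingSetD_eq_image_normalizedScalingSet {d : ℕ} (hd : 2 ≤ d) (m : ℕ) :
    genScalingSetD d (m + 2) =
      (2 * π / ((d : ℝ) ^ (m + 2) - 1) * ·) '' normalizedScalingSet d m := by
  have hD : (1 : ℝ) < d := by exact_mod_cast hd
  have hN : 0 < (d : ℝ) ^ (m + 2) - 1 := sub_pos.2 (one_lt_pow₀ hD (by omega))
  have hc : 0 < 2 * π / ((d : ℝ) ^ (m + 2) - 1) := by positivity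
  have hd0 : (d : ℝ) ≠ 0 := by positivity
  have hN0 := hN.ne'
  rw [genScalingSetD, normalizedScalingSet, biUnion_lt_succ',
    Finset.set_biUnion_Icc_one_eq_biUnion_lt, image_union, image_union, image_iUnion₂,
    ← union_assoc]
  simp only [headInterval, tailInterval, image_mul_left_Ico hc, Nat.add_sub_cancel]
  congr 1
  · congr 1 <;> congr 1 <;> field_simp <;> ring
  · refine iUnion₂_congr fun i _ => ?_
    congr 1 <;> field_simp <;> ring

/-- `E_k^d ⊆ d·E_k^d`, and the wavelet set `W_k^d = d·E_k^d \ E_k^d` is the indicated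
union of three intervals. -/
theorem genScalingSetD_subset_and_waveletSet (d k : ℕ) (hd : 3 ≤ d) (hk : 2 ≤ k) :
    genScalingSetD d k ⊆ (fun x : ℝ => (d:ℝ) * x) '' genScalingSetD d k ∧
    ((fun x : ℝ => (d:ℝ) * x) '' genScalingSetD d k) \ genScalingSetD d k =
      Ico (-((d:ℝ)^(k-1) * ((d:ℝ) - 1) * (2*π)) / ((d:ℝ)^k - 1))
          (-((d:ℝ)^(k-2) * ((d:ℝ) - 1) * (2*π)) / ((d:ℝ)^k - 1)) ∪
      Ico (((d:ℝ)^(k-2) * (2*π)) / ((d:ℝ)^k - 1))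
          (2*π/(d:ℝ) - ((d:ℝ) - 1) * (2*π) / ((d:ℝ) * ((d:ℝ)^k - 1))) ∪
      Ico (2*π*(d:ℝ)^(k-2) - ((d:ℝ)^(k-2) * ((d:ℝ) - 1) * (2*π)) / ((d:ℝ)^k - 1))
          (2*π*(d:ℝ)^(k-2) + ((d:ℝ)^(k-2) * (2*π)) / ((d:ℝ)^k - 1)) := by
  obtain ⟨m, rfl⟩ : ∃ m, k = m + 2 := ⟨k - 2, by omega⟩
  have hD : (2 : ℝ) ≤ d := by exact_mod_cast (by omega : 2 ≤ d)
  have hN : 0 < (d : ℝ) ^ (m + 2) - 1 := sub_pos.2 (one_lt_pow₀ (by linarith) (by omega))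
  have hc : 0 < 2 * π / ((d : ℝ) ^ (m + 2) - 1) := by positivity
  have hd0 : (d : ℝ) ≠ 0 := by positivity
  have hN0 := hN.ne'
  rw [genScalingSetD_eq_image_normalizedScalingSet (by omega),
    image_comm fun _ => mul_left_comm _ _ _]
  refine ⟨image_mono (normalizedScalingSet_subset_image_mul m hD), ?_⟩
  rw [← image_sdiff (mul_right_injective₀ hc.ne'), image_mul_normalizedScalingSet_diff m hD,
    tailInterval, image_union, image_union, image_mul_left_Ico hc, image_mul_left_Ico hc,
    image_mul_left_Ico hc, Nat.add_sub_cancel, show m + 2 - 1 = m + 1 by omega]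
  congr 1
  · congr 1 <;> congr 1 <;> field_simp <;> ring
  · congr 1 <;> field_simp <;> ring
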